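/- (Uniform bound on the Coulomb energy from stability.) Let T, V, F : ℕ → ℝ with Tₙ ≥ 0, Fₙ ≥ 0, and let E₀ ∈ ℝ. Assume: (i) Tₙ + Vₙ + Fₙ ≤ E₀ for all n; (ii) for every α' in an open interval containing two distinct values there are constants C(α'), E₀(α') such that after the rescaling λₙ = 1/|Vₙ|, the rescaled quantities tₙ = λₙ² Tₙ, fₙ = λₙ α² Fₙ satisfy −C(α') λₙ ≤ tₙ/λₙ − 1 + fₙ/α'² ≤ E₀(α') λₙ whenever Vₙ → −∞; and (iii) (Vₙ + Fₙ)² ≤ 4C Tₙ for a fixed C > 0. Then sup_n |Vₙ| < ∞. -/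
import Mathlib


/-- **Uniform bound on the Coulomb energy from stability** (abstract core of Lemma 5.1).
Let `Tₙ, Vₙ, Fₙ` be the kinetic, Coulomb and field energies, with `Tₙ ≥ 0`, `Fₙ ≥ 0`.
Assume:
(i) `Tₙ + Vₙ + Fₙ ≤ E₀`;
(ii) for every `a` in an open interval `(a₁, a₂)` (with `0 < a₁ < a₂`, containing the
fine structure constant `α`), there are constants `Cₐ, Eₐ ≥ 0` such that, with the
rescaling `λₙ = 1/|Vₙ|`, the rescaled kinetic energy `tₙ = λₙ² Tₙ` and field energy
`fₙ = λₙ α² Fₙ` satisfy `−Cₐ λₙ ≤ tₙ/λₙ − 1 + fₙ/a² ≤ Eₐ λₙ` whenever `Vₙ < 0`;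
(iii) `(Vₙ + Fₙ)² ≤ 4 C Tₙ` for a fixed `C > 0`.
Then `sup_n |Vₙ| < ∞`. -/
theorem stmt_11 (T V F : ℕ → ℝ) (E₀ : ℝ) (α a₁ a₂ C : ℝ)
    (hT : ∀ n, 0 ≤ T n) (hF : ∀ n, 0 ≤ F n)
    (ha₁ : 0 < a₁) (ha₁₂ : a₁ < a₂) (hα : α ∈ Set.Ioo a₁ a₂)
    (hstab : ∀ n, T n + V n + F n ≤ E₀)
    (hresc : ∀ a ∈ Set.Ioo a₁ a₂, ∃ Ca Ea : ℝ, 0 ≤ Ca ∧ 0 ≤ Ea ∧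
      ∀ n, V n < 0 →
        (-Ca * (1 / |V n|) ≤
            ((1 / |V n|) ^ 2 * T n) / (1 / |V n|) - 1
              + ((1 / |V n|) * α ^ 2 * F n) / a ^ 2 ∧
          ((1 / |V n|) ^ 2 * T n) / (1 / |V n|) - 1
              + ((1 / |V n|) * α ^ 2 * F n) / a ^ 2 ≤ Ea * (1 / |V n|)))
    (hC : 0 < C)
    (hquad : ∀ n, (V n + F n) ^ 2 ≤ 4 * C * T n) :
    ∃ M : ℝ, ∀ n, |V n| ≤ M := by
  obtain ⟨hα1, hα2⟩ := hα
  have hα0 : 0 < α := lt_trans ha₁ hα1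
  set a' := (α + a₂)/2 with ha'def
  have hαa' : α < a' := by rw [ha'def]; linarith
  have ha'mem : a' ∈ Set.Ioo a₁ a₂ := ⟨by rw [ha'def]; linarith, by rw [ha'def]; linarith⟩
  have ha'0 : 0 < a' := lt_trans hα0 hαa'
  obtain ⟨Cα, Eα, hCα, hEα, h1⟩ := hresc α ⟨hα1, hα2⟩
  obtain ⟨C', E', hC', hE', h2⟩ := hresc a' ha'mem
  have hδ : 0 < 1 - α^2/a'^2 := by
    rw [sub_pos, div_lt_one (by positivity)]
    nlinarith
  set K := (Eα + C') / (1 - α^2/a'^2) with hK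
  have hK0 : 0 ≤ K := div_nonneg (by linarith) hδ.le
  refine ⟨max E₀ 0 + 2*K + 32*C + |E₀|, fun n => ?_⟩
  have habs : 0 ≤ |E₀| := abs_nonneg _
  by_cases hVn : 0 ≤ V n
  · rw [abs_of_nonneg hVn]
    have h1 : V n ≤ E₀ := by have := hstab n; have := hT n; have := hF n; linarith
    have h2 : V n ≤ max E₀ 0 := le_trans h1 (le_max_left _ _)
    linarith
  · push_neg at hVn
    have hv0 : 0 < |V n| := abs_pos.mpr (ne_of_lt hVn)
    set v := |V n| with hvdef
    have hvV : V n = -v := by rw [hvdef, abs_of_neg hVn]; ring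
    have hl0 : 0 < 1/v := by positivity
    obtain ⟨h1l, h1u⟩ := h1 n hVn
    obtain ⟨h2l, h2u⟩ := h2 n hVn
    have hv0' : v ≠ 0 := ne_of_gt hv0
    have e1 : ((1/v)^2 * T n)/(1/v) = (1/v) * T n := by field_simp
    have e2 : ((1/v) * α^2 * F n)/α^2 = (1/v) * F n := by field_simp
    have e3 : ((1/v) * α^2 * F n)/a'^2 = (1/v) * (F n * (α^2/a'^2)) := by
      field_simp
    rw [e1, e2] at h1u
    rw [e1, e3] at h2l
    have hFK : F n ≤ K := by
      rw [hK, le_div_iff₀ hδ]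
      have hcancel : (1/v) * (F n * (1 - α^2/a'^2)) ≤ (1/v) * (Eα + C') := by
        nlinarith [h1u, h2l]
      have := le_of_mul_le_mul_left hcancel hl0
      linarith
    by_contra hcon
    push_neg at hcon
    have hEv : |E₀| < v := by linarith [le_max_right E₀ (0:ℝ), le_max_left E₀ (0:ℝ)]
    have hE₀v : E₀ < v := lt_of_le_of_lt (le_abs_self E₀) hEv
    have hTb : T n ≤ E₀ + v := by have := hstab n; have := hF n; linarith [hvV]
    have hq := hquad n
    rw [hvV] at hq
    have hmax0 : (0:ℝ) ≤ max E₀ 0 := le_max_right _ _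
    clear h1 h2 hresc h1l h2u hstab hquad h1u h2l e1 e2 e3
    clear_value v K a'
    have hF2 : 2 * F n ≤ v := by linarith
    have h32 : 32 * C < v := by linarith
    have hvF : v/2 ≤ v - F n := by linarith
    have hq2 : (v/2)^2 ≤ 4*C*(E₀+v) := by
      calc (v/2)^2 ≤ (v - F n)^2 := by
            exact pow_le_pow_left₀ (by positivity) hvF 2
        _ = (-v + F n)^2 := by ring
        _ ≤ 4*C*T n := hq
        _ ≤ 4*C*(E₀+v) := mul_le_mul_of_nonneg_left hTb (by linarith)
    have hint1 : 4*C*E₀ < 4*C*v := by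
      have : (0:ℝ) < 4*C := by linarith
      exact mul_lt_mul_of_pos_left hE₀v this
    have hint2 : 32*C*v < v*v := mul_lt_mul_of_pos_right h32 hv0
    have hq2' : v*v/4 ≤ 4*C*E₀ + 4*C*v := by
      calc v*v/4 = (v/2)^2 := by ring
        _ ≤ 4*C*(E₀+v) := hq2
        _ = 4*C*E₀ + 4*C*v := by ring
    linarith [hq2', hint1, hint2]
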